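/- Let Db be a database, O a set of objects, and π_O(Db) the restriction of Db to the objects in O. Then the set of formal concepts of π_O(Db) equals { (X, Y ∩ O) : (X,Y) ∈ GE_O }, where GE_O is the set of greatest elements (for ⪯) of the O-equivalence classes of the concepts of Db. -/

import Mathlib

/-
Write `X↑` for the objects of the universe sharing every attribute of `X`, and `Y↓` dually;
concepts are exactly the pairs with `X = Y↓` and `Y = X↑`. A concept `(X, Z)` of the projection
lifts to the concept `(X, X↑)` of `Db`, with `X↑ ∩ O = Z`, and `(X, X↑)` dominates its class
because every O-equivalent concept `(X', Y')` has `X' = Y'↓ ⊆ Z↓ = X`. Conversely, if `(X, Y)`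
is greatest in its class, the closure of `(Y ∩ O)↓` is a concept O-equivalent to `(X, Y)`, hence
below it, which forces `(Y ∩ O)↓ = X`, so that `(X, Y ∩ O)` is a concept of the projection.
-/

variable {α β : Type*} [DecidableEq α] [DecidableEq β]

/-- `(X, Y)` is a 1-rectangle of the database with relation `Db`,
attribute set `AA` and object set `OO`: every attribute of `X` is in
relation with every object of `Y`. -/
def IsRect (Db : α → β → Prop) (AA : Finset α) (OO : Finset β)
    (X : Finset α) (Y : Finset β) : Prop :=
  X ⊆ AA ∧ Y ⊆ OO ∧ ∀ a ∈ X, ∀ o ∈ Y, Db a o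

/-- A formal concept is a 1-rectangle that is maximal for componentwise
inclusion of bi-sets. -/
def IsConcept (Db : α → β → Prop) (AA : Finset α) (OO : Finset β)
    (X : Finset α) (Y : Finset β) : Prop :=
  IsRect Db AA OO X Y ∧
    ∀ X' Y', IsRect Db AA OO X' Y' → X ⊆ X' → Y ⊆ Y' → X = X' ∧ Y = Y'

section Derivation

variable {α β : Type*}

open Classical in
noncomputable def commonObjs (Db : α → β → Prop) (OO : Finset β) (X : Finset α) : Finset β :=
  OO.filter fun o => ∀ a ∈ X, Db a o

open Classical in
noncomputable def commonAttrs (Db : α → β → Prop) (AA : Finset α) (Y : Finset β) : Finset α :=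
  AA.filter fun a => ∀ o ∈ Y, Db a o

variable {Db : α → β → Prop} {AA : Finset α} {OO : Finset β} {X X' : Finset α} {Y Y' : Finset β}

theorem mem_commonObjs {o : β} : o ∈ commonObjs Db OO X ↔ o ∈ OO ∧ ∀ a ∈ X, Db a o := by
  classical exact Finset.mem_filter

theorem mem_commonAttrs {a : α} : a ∈ commonAttrs Db AA Y ↔ a ∈ AA ∧ ∀ o ∈ Y, Db a o := by
  classical exact Finset.mem_filter

theorem commonObjs_subset : commonObjs Db OO X ⊆ OO := fun _ ho => (mem_commonObjs.1 ho).1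

theorem commonAttrs_subset : commonAttrs Db AA Y ⊆ AA := fun _ ha => (mem_commonAttrs.1 ha).1

theorem commonObjs_anti (h : X ⊆ X') : commonObjs Db OO X' ⊆ commonObjs Db OO X :=
  fun _ ho => mem_commonObjs.2
    ⟨(mem_commonObjs.1 ho).1, fun a ha => (mem_commonObjs.1 ho).2 a (h ha)⟩

theorem commonAttrs_anti (h : Y ⊆ Y') : commonAttrs Db AA Y' ⊆ commonAttrs Db AA Y :=
  fun _ ha => mem_commonAttrs.2
    ⟨(mem_commonAttrs.1 ha).1, fun o ho => (mem_commonAttrs.1 ha).2 o (h ho)⟩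

theorem isRect_iff_subset_commonObjs :
    IsRect Db AA OO X Y ↔ X ⊆ AA ∧ Y ⊆ commonObjs Db OO X := by
  simp only [IsRect, Finset.subset_iff, mem_commonObjs]
  exact ⟨fun ⟨hX, hY, h⟩ => ⟨hX, fun o ho => ⟨hY ho, fun a ha => h a ha o ho⟩⟩,
    fun ⟨hX, h⟩ => ⟨hX, fun o ho => (h ho).1, fun a ha o ho => (h ho).2 a ha⟩⟩

theorem isRect_iff_subset_commonAttrs :
    IsRect Db AA OO X Y ↔ Y ⊆ OO ∧ X ⊆ commonAttrs Db AA Y := by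
  simp only [IsRect, Finset.subset_iff, mem_commonAttrs]
  exact ⟨fun ⟨hX, hY, h⟩ => ⟨hY, fun a ha => ⟨hX ha, fun o ho => h a ha o ho⟩⟩,
    fun ⟨hY, h⟩ => ⟨fun a ha => (h ha).1, hY, fun a ha o ho => (h ha).2 o ho⟩⟩

theorem subset_commonAttrs_commonObjs (hX : X ⊆ AA) :
    X ⊆ commonAttrs Db AA (commonObjs Db OO X) :=
  (isRect_iff_subset_commonAttrs.1 (isRect_iff_subset_commonObjs.2 ⟨hX, subset_rfl⟩)).2

theorem subset_commonObjs_commonAttrs (hY : Y ⊆ OO) :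
    Y ⊆ commonObjs Db OO (commonAttrs Db AA Y) :=
  (isRect_iff_subset_commonObjs.1 (isRect_iff_subset_commonAttrs.2 ⟨hY, subset_rfl⟩)).2

theorem isConcept_iff :
    IsConcept Db AA OO X Y ↔ X = commonAttrs Db AA Y ∧ Y = commonObjs Db OO X := by
  constructor
  · rintro ⟨hrect, hmax⟩
    obtain ⟨hX, hYX⟩ := isRect_iff_subset_commonObjs.1 hrect
    obtain ⟨hY, hXY⟩ := isRect_iff_subset_commonAttrs.1 hrect
    exact ⟨(hmax _ _ (isRect_iff_subset_commonAttrs.2 ⟨hY, subset_rfl⟩) hXY subset_rfl).1,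
      (hmax _ _ (isRect_iff_subset_commonObjs.2 ⟨hX, subset_rfl⟩) subset_rfl hYX).2⟩
  · rintro ⟨hX, hY⟩
    refine ⟨isRect_iff_subset_commonObjs.2 ⟨hX ▸ commonAttrs_subset, hY.le⟩,
      fun X' Y' hrect' hXX' hYY' => ⟨?_, ?_⟩⟩
    · refine hXX'.antisymm ?_
      calc X' ⊆ commonAttrs Db AA Y' := (isRect_iff_subset_commonAttrs.1 hrect').2
        _ ⊆ commonAttrs Db AA Y := commonAttrs_anti hYY'
        _ = X := hX.symm
    · refine hYY'.antisymm ?_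
      calc Y' ⊆ commonObjs Db OO X' := (isRect_iff_subset_commonObjs.1 hrect').2
        _ ⊆ commonObjs Db OO X := commonObjs_anti hXX'
        _ = Y := hY.symm

theorem isConcept_commonAttrs_commonObjs (hX : X ⊆ AA) :
    IsConcept Db AA OO (commonAttrs Db AA (commonObjs Db OO X)) (commonObjs Db OO X) := by
  refine isConcept_iff.2 ⟨rfl, (subset_commonObjs_commonAttrs commonObjs_subset).antisymm ?_⟩
  exact commonObjs_anti (subset_commonAttrs_commonObjs hX)

end Derivation

section Projection

variable {α β : Type*} [DecidableEq β]

/-- `(X, Y) ∈ GE_O` in the paper's notation. -/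
def IsGreatestInOClass (Db : α → β → Prop) (AA : Finset α) (OO O : Finset β)
    (X : Finset α) (Y : Finset β) : Prop :=
  IsConcept Db AA OO X Y ∧
    ∀ X' Y', IsConcept Db AA OO X' Y' → Y' ∩ O = Y ∩ O → X' ⊆ X ∧ Y ⊆ Y'

variable {Db : α → β → Prop} {AA : Finset α} {OO O : Finset β} {X : Finset α} {Y : Finset β}

theorem commonObjs_inter_of_subset (hO : O ⊆ OO) :
    commonObjs Db OO X ∩ O = commonObjs Db O X := by
  ext o
  simp only [Finset.mem_inter, mem_commonObjs]
  exact ⟨fun ⟨⟨_, h⟩, ho⟩ => ⟨ho, h⟩, fun ⟨ho, h⟩ => ⟨⟨hO ho, h⟩, ho⟩⟩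

theorem IsConcept.isGreatestInOClass_commonObjs (hO : O ⊆ OO) (h : IsConcept Db AA O X Y) :
    IsGreatestInOClass Db AA OO O X (commonObjs Db OO X) ∧ commonObjs Db OO X ∩ O = Y := by
  obtain ⟨hXY, hYX⟩ := isConcept_iff.1 h
  have hclass : commonObjs Db OO X ∩ O = Y := by rw [commonObjs_inter_of_subset hO, hYX]
  have hlower : ∀ Y', Y' ∩ O = Y → commonAttrs Db AA Y' ⊆ X := fun Y' hY' =>
    hXY ▸ hY' ▸ commonAttrs_anti Finset.inter_subset_left
  have hconcept : IsConcept Db AA OO X (commonObjs Db OO X) := by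
    have hX : X ⊆ AA := hXY ▸ commonAttrs_subset
    have hclosed : commonAttrs Db AA (commonObjs Db OO X) = X :=
      (hlower _ hclass).antisymm (subset_commonAttrs_commonObjs hX)
    simpa only [hclosed] using isConcept_commonAttrs_commonObjs (Db := Db) (OO := OO) hX
  refine ⟨⟨hconcept, fun X' Y' h' hY' => ?_⟩, hclass⟩
  obtain ⟨hX'Y', hY'X'⟩ := isConcept_iff.1 h'
  have hX' : X' ⊆ X := hX'Y' ▸ hlower Y' (hY'.trans hclass)
  exact ⟨hX', hY'X' ▸ commonObjs_anti hX'⟩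

theorem IsGreatestInOClass.isConcept_inter (hO : O ⊆ OO)
    (h : IsGreatestInOClass Db AA OO O X Y) : IsConcept Db AA O X (Y ∩ O) := by
  obtain ⟨hXY, hYX⟩ := isConcept_iff.1 h.1
  have hYO : Y ∩ O = commonObjs Db O X := by rw [hYX, commonObjs_inter_of_subset hO]
  refine isConcept_iff.2 ⟨(hXY ▸ commonAttrs_anti Finset.inter_subset_left).antisymm ?_, hYO⟩
  set X₁ := commonAttrs Db AA (Y ∩ O)
  have hXX₁ : X ⊆ X₁ := hXY ▸ commonAttrs_anti Finset.inter_subset_left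
  have hclass : commonObjs Db OO X₁ ∩ O = Y ∩ O := by
    rw [commonObjs_inter_of_subset hO]
    refine subset_antisymm ?_ (subset_commonObjs_commonAttrs ?_)
    · exact hYO ▸ commonObjs_anti hXX₁
    · exact Finset.inter_subset_right
  calc X₁ ⊆ commonAttrs Db AA (commonObjs Db OO X₁) :=
        subset_commonAttrs_commonObjs commonAttrs_subset
    _ ⊆ X := (h.2 _ _ (isConcept_commonAttrs_commonObjs commonAttrs_subset) hclass).1

end Projection

/-- Object-side dual of the projection theorem: the concepts of the database
restricted to the objects of `O` are exactly `(X, Y ∩ O)` for `(X,Y)`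
ranging over the greatest elements of the `O`-equivalence classes. -/
theorem projection_theorem_dual (Db : α → β → Prop) (AA : Finset α) (OO : Finset β)
    (O : Finset β) (hO : O ⊆ OO) :
    {C : Finset α × Finset β | IsConcept Db AA O C.1 C.2} =
      (fun C : Finset α × Finset β => (C.1, C.2 ∩ O)) ''
        {C : Finset α × Finset β | IsConcept Db AA OO C.1 C.2 ∧
          ∀ X' Y', IsConcept Db AA OO X' Y' → Y' ∩ O = C.2 ∩ O →
            X' ⊆ C.1 ∧ C.2 ⊆ Y'} := by
  ext ⟨X, Y⟩
  constructor
  · intro hC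
    obtain ⟨hgreatest, hclass⟩ := IsConcept.isGreatestInOClass_commonObjs hO hC
    exact ⟨(X, commonObjs Db OO X), hgreatest, Prod.ext rfl hclass⟩
  · rintro ⟨⟨X₀, Y₀⟩, hgreatest, ⟨⟩⟩
    exact IsGreatestInOClass.isConcept_inter hO hgreatest
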